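/- For a hypermap built with open orbits, the closure cA of the partial successor map A at each dimension k is a permutation of the existing darts, and cA⁻¹ (the closure of the predecessor map) is its inverse permutation. -/
import Mathlib


open scoped Classical

/-- Dimensions 0 and 1. -/
inductive Dim : Type
  | zero : Dim
  | one : Dim
deriving DecidableEq

/-- Free maps: empty map, dart insertion, dart linking at a dimension. -/
inductive Fmap : Type
  | V : Fmap
  | I : Fmap → Nat → Fmap
  | L : Fmap → Dim → Nat → Nat → Fmap

namespace Fmap

/-- The nil (exception) dart. -/
def nil : Nat := 0

/-- A dart exists in the map. -/
def exd : Fmap → Nat → Prop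
  | V, _ => False
  | I m0 x, z => z = x ∨ exd m0 z
  | L m0 _ _ _, z => exd m0 z

/-- The (partial) k-successor α_k, with nil for undefined. -/
def A : Fmap → Dim → Nat → Nat
  | V, _, _ => nil
  | I m0 _, k, z => A m0 k z
  | L m0 k0 x y, k, z =>
      if k = k0 then (if z = x then y else A m0 k z) else A m0 k z

/-- The (partial) k-predecessor. -/
def A_1 : Fmap → Dim → Nat → Nat
  | V, _, _ => nil
  | I m0 _, k, z => A_1 m0 k z
  | L m0 k0 x y, k, z =>
      if k = k0 then (if z = y then x else A_1 m0 k z) else A_1 m0 k z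

/-- z has a k-successor. -/
def succd (m : Fmap) (k : Dim) (z : Nat) : Prop := A m k z ≠ nil

/-- z has a k-predecessor. -/
def predd (m : Fmap) (k : Dim) (z : Nat) : Prop := A_1 m k z ≠ nil

/-- Bottom dart of the open k-orbit of z. -/
def bottom : Fmap → Dim → Nat → Nat
  | V, _, _ => nil
  | I m0 x, k, z => if z = x then z else bottom m0 k z
  | L m0 k0 x y, k, z =>
      if k = k0 then
        (if bottom m0 k z = y then bottom m0 k x else bottom m0 k z)
      else bottom m0 k z

/-- Top dart of the open k-orbit of z. -/
def top : Fmap → Dim → Nat → Nat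
  | V, _, _ => nil
  | I m0 x, k, z => if z = x then z else top m0 k z
  | L m0 k0 x y, k, z =>
      if k = k0 then
        (if top m0 k z = x then top m0 k y else top m0 k z)
      else top m0 k z

/-- Closure of A: a permutation of existing darts. -/
def cA : Fmap → Dim → Nat → Nat
  | V, _, _ => nil
  | I m0 x, k, z => if z = x then z else cA m0 k z
  | L m0 k0 x y, k, z =>
      if k = k0 then
        (if z = x then y
         else if z = top m0 k y then bottom m0 k x
         else cA m0 k z)
      else cA m0 k z

/-- Closure of A_1: the inverse permutation of cA. -/
def cA_1 : Fmap → Dim → Nat → Nat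
  | V, _, _ => nil
  | I m0 x, k, z => if z = x then z else cA_1 m0 k z
  | L m0 k0 x y, k, z =>
      if k = k0 then
        (if z = y then x
         else if z = bottom m0 k x then top m0 k y
         else cA_1 m0 k z)
      else cA_1 m0 k z

/-- Precondition for inserting a dart. -/
def prec_I (m : Fmap) (x : Nat) : Prop := x ≠ nil ∧ ¬ exd m x

/-- Precondition for linking two darts at a dimension (keeping orbits open). -/
def prec_L (m : Fmap) (k : Dim) (x y : Nat) : Prop :=
  exd m x ∧ exd m y ∧ ¬ succd m k x ∧ ¬ predd m k y ∧ cA m k x ≠ y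

/-- The hypermap invariant. -/
def inv_hmap : Fmap → Prop
  | V => True
  | I m0 x => inv_hmap m0 ∧ prec_I m0 x
  | L m0 k0 x y => inv_hmap m0 ∧ prec_L m0 k0 x y

/-- The closed face map cF, corresponding to φ = α₁⁻¹ ∘ α₀⁻¹. -/
def cF (m : Fmap) (z : Nat) : Nat := cA_1 m Dim.one (cA_1 m Dim.zero z)

/-- Two darts are in the same face (existence of a cF-path). -/
def expf (m : Fmap) (z t : Nat) : Prop := exd m z ∧ ∃ n : ℕ, (cF m)^[n] z = t

/-- Two darts are in the same edge (existence of a (cA zero)-path). -/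
def expe (m : Fmap) (z t : Nat) : Prop := exd m z ∧ ∃ n : ℕ, (fun w => cA m Dim.zero w)^[n] z = t

/-- Two darts are in the same connected component. -/
def eqc : Fmap → Nat → Nat → Prop
  | V, _, _ => False
  | I m0 x, z, t => (z = x ∧ t = x) ∨ eqc m0 z t
  | L m0 _ x y, z, t =>
      eqc m0 z t ∨ (eqc m0 z x ∧ eqc m0 y t) ∨ (eqc m0 z y ∧ eqc m0 x t)

/-- Number of darts. -/
def nd : Fmap → ℤ
  | V => 0
  | I m0 _ => nd m0 + 1
  | L m0 _ _ _ => nd m0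

/-- Number of vertices. -/
def nv : Fmap → ℤ
  | V => 0
  | I m0 _ => nv m0 + 1
  | L m0 Dim.zero _ _ => nv m0
  | L m0 Dim.one _ _ => nv m0 - 1

/-- Number of edges. -/
def ne : Fmap → ℤ
  | V => 0
  | I m0 _ => ne m0 + 1
  | L m0 Dim.zero _ _ => ne m0 - 1
  | L m0 Dim.one _ _ => ne m0

/-- Number of faces. -/
noncomputable def nf : Fmap → ℤ
  | V => 0
  | I m0 _ => nf m0 + 1
  | L m0 Dim.zero x y => if expf m0 (cA_1 m0 Dim.one x) y then nf m0 + 1 else nf m0 - 1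
  | L m0 Dim.one x y => if expf m0 x (cA m0 Dim.zero y) then nf m0 + 1 else nf m0 - 1

/-- Number of connected components. -/
noncomputable def nc : Fmap → ℤ
  | V => 0
  | I m0 _ => nc m0 + 1
  | L m0 _ x y => if eqc m0 x y then nc m0 else nc m0 - 1

/-- Euler characteristic. -/
noncomputable def ec (m : Fmap) : ℤ := nv m + ne m + nf m - nd m

/-- Genus. -/
noncomputable def genus (m : Fmap) : ℤ := nc m - ec m / 2

/-- Planarity. -/
def planar (m : Fmap) : Prop := genus m = 0

/-- Breaking the latest forward k-link of x. -/
def B : Fmap → Dim → Nat → Fmap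
  | V, _, _ => V
  | I m0 x0, k, x => I (B m0 k x) x0
  | L m0 k0 x0 y0, k, x =>
      if k = k0 ∧ x = x0 then m0 else L (B m0 k x) k0 x0 y0

/-- Breaking all the 0-links of the darts of a list, first one first. -/
def Bl (m : Fmap) : List (Nat × Bool) → Fmap
  | [] => m
  | (x, _) :: l0 => Bl (B m Dim.zero x) l0

/-- The dart representing the face coded by a double-link (x, b). -/
def faceDart (m : Fmap) : Nat × Bool → Nat
  | (x, b) => if b then A m Dim.zero x else bottom m Dim.zero x

/-- The edge of x is distinct from the edges of the darts of a list. -/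
def distinct_edge_list (m : Fmap) (x : Nat) : List (Nat × Bool) → Prop
  | [] => True
  | (x', _) :: l0 => distinct_edge_list m x l0 ∧ ¬ expe m x x'

/-- Ring condition (0): unicity of edges, and each dart 0-linked. -/
def pre_ring0 (m : Fmap) : List (Nat × Bool) → Prop
  | [] => True
  | (x, _) :: l0 => pre_ring0 m l0 ∧ distinct_edge_list m x l0 ∧ succd m Dim.zero x

/-- Adjacency of the faces coded by two double-links. -/
def adjacent_faces (m : Fmap) : Nat × Bool → Nat × Bool → Prop
  | (x, b), (x', b') =>
      let y := A m Dim.zero x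
      let y' := A m Dim.zero x'
      let x0 := bottom m Dim.zero x
      let x'0 := bottom m Dim.zero x'
      if b then (if b' then expf m x0 y' else expf m x0 x'0)
      else (if b' then expf m y y' else expf m y x'0)

/-- Ring condition (1): continuity. -/
def pre_ring1 (m : Fmap) : List (Nat × Bool) → Prop
  | [] => True
  | xb :: l0 =>
      pre_ring1 m l0 ∧
      match l0 with
      | [] => True
      | xb' :: _ => adjacent_faces m xb xb'

/-- Last element of a list of double-links (with default). -/
def lastd : List (Nat × Bool) → Nat × Bool
  | [] => (nil, true)
  | [a] => a
  | _ :: a :: l0 => lastd (a :: l0)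

/-- Ring condition (2): circularity. -/
def pre_ring2 (m : Fmap) : List (Nat × Bool) → Prop
  | [] => True
  | (x, b) :: l0 =>
      match l0 with
      | [] => expf m (A m Dim.zero x) (bottom m Dim.zero x)
      | _ :: _ => adjacent_faces m (lastd l0) (x, b)

/-- The faces coded by two double-links are distinct. -/
def distinct_faces (m : Fmap) (xb xb' : Nat × Bool) : Prop :=
  ¬ expf m (faceDart m xb) (faceDart m xb')

/-- The face of xb is distinct from the faces of a list. -/
def distinct_face_list (m : Fmap) (xb : Nat × Bool) : List (Nat × Bool) → Prop
  | [] => True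
  | xb' :: l0 => distinct_face_list m xb l0 ∧ distinct_faces m xb xb'

/-- Ring condition (3): simplicity. -/
def pre_ring3 (m : Fmap) : List (Nat × Bool) → Prop
  | [] => True
  | xb :: l0 => pre_ring3 m l0 ∧ distinct_face_list m xb l0

/-- A ring of faces. -/
def ring (m : Fmap) (l : List (Nat × Bool)) : Prop :=
  l ≠ [] ∧ pre_ring0 m l ∧ pre_ring1 m l ∧ pre_ring2 m l ∧ pre_ring3 m l

lemma exd_ne_nil : ∀ (m : Fmap), inv_hmap m → ∀ z, exd m z → z ≠ nil := by
  intro m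
  induction m with
  | V => intro _ z hz; simp only [exd] at hz
  | I m0 x ih =>
    intro h z hz
    simp only [exd] at hz
    rcases hz with rfl | hz
    · exact h.2.1
    · exact ih h.1 z hz
  | L m0 k0 x y ih =>
    intro h z hz
    exact ih h.1 z (by simpa only [exd] using hz)

lemma exd_top : ∀ (m : Fmap), inv_hmap m → ∀ (k : Dim) (z : Nat),
    exd m z → exd m (top m k z) := by
  intro m
  induction m with
  | V => intro _ k z hz; simp only [exd] at hz
  | I m0 x ih =>
    intro h k z hz
    simp only [exd, top] at *
    by_cases hzx : z = x
    · simp [hzx]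
    · simp only [hzx, if_false]
      rcases hz with rfl | hz
      · exact absurd rfl hzx
      · exact Or.inr (ih h.1 k z hz)
  | L m0 k0 x y ih =>
    intro h k z hz
    simp only [exd, top] at *
    split_ifs
    · exact ih h.1 k y h.2.2.1
    · exact ih h.1 k z hz
    · exact ih h.1 k z hz

lemma exd_bottom : ∀ (m : Fmap), inv_hmap m → ∀ (k : Dim) (z : Nat),
    exd m z → exd m (bottom m k z) := by
  intro m
  induction m with
  | V => intro _ k z hz; simp only [exd] at hz
  | I m0 x ih =>
    intro h k z hz
    simp only [exd, bottom] at *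
    by_cases hzx : z = x
    · simp [hzx]
    · simp only [hzx, if_false]
      rcases hz with rfl | hz
      · exact absurd rfl hzx
      · exact Or.inr (ih h.1 k z hz)
  | L m0 k0 x y ih =>
    intro h k z hz
    simp only [exd, bottom] at *
    split_ifs
    · exact ih h.1 k x h.2.1
    · exact ih h.1 k z hz
    · exact ih h.1 k z hz
lemma top_nosucc : ∀ (m : Fmap), inv_hmap m → ∀ (k : Dim) (z : Nat),
    exd m z → ¬ succd m k z → top m k z = z := by
  intro m
  induction m with
  | V => intro _ k z hz; simp only [exd] at hz
  | I m0 x ih =>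
    intro h k z hz hs
    simp only [exd] at hz
    simp only [succd, A, ne_eq, not_not] at hs
    simp only [top]
    by_cases hzx : z = x
    · simp [hzx]
    · simp only [hzx, if_false]
      rcases hz with rfl | hz
      · exact absurd rfl hzx
      · exact ih h.1 k z hz (by simp [succd, hs])
  | L m0 k0 x y ih =>
    intro h k z hz hs
    simp only [exd] at hz
    simp only [succd, A, ne_eq, not_not] at hs
    simp only [top]
    by_cases hk : k = k0
    · simp only [hk, if_pos rfl] at hs ⊢
      by_cases hzx : z = x
      · rw [if_pos hzx] at hs
        exact absurd hs (exd_ne_nil m0 h.1 y h.2.2.1)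
      · simp only [hzx, if_false, if_true, eq_self_iff_true] at hs
        have ht : top m0 k0 z = z := ih h.1 k0 z hz (by simp [succd, hs])
        simp [ht, hzx]
    · simp only [hk, if_false] at hs ⊢
      exact ih h.1 k z hz (by simp [succd, hs])

lemma bottom_nopred : ∀ (m : Fmap), inv_hmap m → ∀ (k : Dim) (z : Nat),
    exd m z → ¬ predd m k z → bottom m k z = z := by
  intro m
  induction m with
  | V => intro _ k z hz; simp only [exd] at hz
  | I m0 x ih =>
    intro h k z hz hs
    simp only [exd] at hz
    simp only [predd, A_1, ne_eq, not_not] at hs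
    simp only [bottom]
    by_cases hzx : z = x
    · simp [hzx]
    · simp only [hzx, if_false]
      rcases hz with rfl | hz
      · exact absurd rfl hzx
      · exact ih h.1 k z hz (by simp [predd, hs])
  | L m0 k0 x y ih =>
    intro h k z hz hs
    simp only [exd] at hz
    simp only [predd, A_1, ne_eq, not_not] at hs
    simp only [bottom]
    by_cases hk : k = k0
    · simp only [hk, if_pos rfl] at hs ⊢
      by_cases hzy : z = y
      · rw [if_pos hzy] at hs
        exact absurd hs (exd_ne_nil m0 h.1 x h.2.1)
      · simp only [hzy, if_false, if_true, eq_self_iff_true] at hs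
        have ht : bottom m0 k0 z = z := ih h.1 k0 z hz (by simp [predd, hs])
        simp [ht, hzy]
    · simp only [hk, if_false] at hs ⊢
      exact ih h.1 k z hz (by simp [predd, hs])
lemma cA_top_bottom : ∀ (m : Fmap), inv_hmap m → ∀ (k : Dim) (z : Nat), exd m z →
    cA m k (top m k z) = bottom m k z ∧ cA_1 m k (bottom m k z) = top m k z := by
  intro m
  induction m with
  | V => intro _ k z hz; simp only [exd] at hz
  | I m0 x ih =>
    intro h k z hz
    simp only [exd] at hz
    by_cases hzx : z = x
    · simp [top, bottom, cA, cA_1, hzx]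
    · rcases hz with rfl | hz
      · exact absurd rfl hzx
      have h1 : top m0 k z ≠ x := fun e => h.2.2 (e ▸ exd_top m0 h.1 k z hz)
      have h2 : bottom m0 k z ≠ x := fun e => h.2.2 (e ▸ exd_bottom m0 h.1 k z hz)
      simp only [top, bottom, cA, cA_1, hzx, if_false, h1, h2]
      exact ih h.1 k z hz
  | L m0 k0 x y ih =>
    intro h k z hz
    simp only [exd] at hz
    simp only [inv_hmap, prec_L] at h
    obtain ⟨hm, hx, hy, hnsx, hnpy, hne⟩ := h
    by_cases hk : k = k0
    · subst hk
      have htx : top m0 k x = x := top_nosucc m0 hm k x hx hnsx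
      have hby : bottom m0 k y = y := bottom_nopred m0 hm k y hy hnpy
      have ihx := ih hm k x hx
      have ihy := ih hm k y hy
      have ihz := ih hm k z hz
      have hcx : cA m0 k x = bottom m0 k x := by
        have := ihx.1; rwa [htx] at this
      have hc1y : cA_1 m0 k y = top m0 k y := by
        have := ihy.2; rwa [hby] at this
      have hbxy : bottom m0 k x ≠ y := fun e => hne (hcx.trans e)
      have htyx : top m0 k y ≠ x := by
        intro e
        apply hne
        have := ihy.1
        rw [e, hby] at this
        exact this
      constructor
      · by_cases hA : top m0 k z = x
        · have hbz : bottom m0 k z = bottom m0 k x := by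
            have h3 := ihz.1
            rw [hA] at h3
            exact h3.symm.trans hcx
          simp [top, bottom, cA, hA, htyx, hbz, hbxy]
        · by_cases hB : top m0 k z = top m0 k y
          · have hbz : bottom m0 k z = y := by
              have h3 := ihz.1
              rw [hB, ihy.1, hby] at h3
              exact h3.symm
            simp [top, bottom, cA, hA, hB, hbz, htyx]
          · have hbz : bottom m0 k z ≠ y := by
              intro e
              apply hB
              have h3 := ihz.2
              rw [e, hc1y] at h3
              exact h3.symm
            simp [top, bottom, cA, hA, hB, hbz, ihz.1]
      · by_cases hA : bottom m0 k z = y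
        · have htz : top m0 k z = top m0 k y := by
            have h3 := ihz.2
            rw [hA, hc1y] at h3
            exact h3.symm
          simp [top, bottom, cA_1, hA, hbxy, htz, htyx]
        · by_cases hB : bottom m0 k z = bottom m0 k x
          · have htz : top m0 k z = x := by
              have h3 := ihz.2
              rw [hB, ihx.2, htx] at h3
              exact h3.symm
            simp [top, bottom, cA_1, hA, hB, htz, hbxy]
          · have htz : top m0 k z ≠ x := by
              intro e
              apply hB
              have h3 := ihz.1
              rw [e, hcx] at h3
              exact h3.symm
            simp [top, bottom, cA_1, hA, hB, htz, ihz.2]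
    · have ihz := ih hm k z hz
      simp [top, bottom, cA, cA_1, hk, ihz.1, ihz.2]
end Fmap

open Fmap
/-- cA is a permutation of the existing darts and cA_1 is its inverse. -/
theorem cA_perm (m : Fmap) (h : inv_hmap m) (k : Dim) :
    ∀ z : Nat, exd m z →
      exd m (cA m k z) ∧ exd m (cA_1 m k z) ∧
      cA_1 m k (cA m k z) = z ∧ cA m k (cA_1 m k z) = z := by
  revert h
  induction m with
  | V => intro _ z hz; simp only [exd] at hz
  | I m0 x ih =>
    intro h z hz
    simp only [inv_hmap, prec_I] at h
    obtain ⟨hm, hxnil, hnx⟩ := h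
    simp only [exd] at hz
    by_cases hzx : z = x
    · simp [cA, cA_1, exd, hzx]
    rcases hz with rfl | hz
    · exact absurd rfl hzx
    obtain ⟨e1, e2, e3, e4⟩ := ih hm z hz
    have h1 : cA m0 k z ≠ x := fun e => hnx (e ▸ e1)
    have h2 : cA_1 m0 k z ≠ x := fun e => hnx (e ▸ e2)
    simp only [cA, cA_1, exd, hzx, if_false, h1, h2, e3, e4]
    exact ⟨Or.inr e1, Or.inr e2, trivial, trivial⟩
  | L m0 k0 x y ih =>
    intro h z hz
    simp only [inv_hmap, prec_L] at h
    obtain ⟨hm, hx, hy, hnsx, hnpy, hne⟩ := h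
    simp only [exd] at hz
    by_cases hk : k = k0
    case neg =>
      obtain ⟨e1, e2, e3, e4⟩ := ih hm z hz
      simp [cA, cA_1, exd, hk, e1, e2, e3, e4]
    subst hk
    have htx : top m0 k x = x := top_nosucc m0 hm k x hx hnsx
    have hby : bottom m0 k y = y := bottom_nopred m0 hm k y hy hnpy
    have hcx : cA m0 k x = bottom m0 k x := by
      have := (cA_top_bottom m0 hm k x hx).1; rwa [htx] at this
    have hc1y : cA_1 m0 k y = top m0 k y := by
      have := (cA_top_bottom m0 hm k y hy).2; rwa [hby] at this
    have hbxy : bottom m0 k x ≠ y := fun e => hne (hcx.trans e)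
    have htyx : top m0 k y ≠ x := by
      intro e
      apply hne
      have := (cA_top_bottom m0 hm k y hy).1
      rw [e, hby] at this
      exact this
    obtain ⟨e1, e2, e3, e4⟩ := ih hm z hz
    refine ⟨?_, ?_, ?_, ?_⟩
    · by_cases h1 : z = x
      · simp [cA, exd, h1, hy]
      by_cases h2 : z = top m0 k y
      · simp [cA, exd, h1, h2, htyx, exd_bottom m0 hm k x hx]
      · simp [cA, exd, h1, h2, e1]
    · by_cases h1 : z = y
      · simp [cA_1, exd, h1, hx]
      by_cases h2 : z = bottom m0 k x
      · simp [cA_1, exd, h1, h2, hbxy, exd_top m0 hm k y hy]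
      · simp [cA_1, exd, h1, h2, e2]
    · by_cases h1 : z = x
      · simp [cA, cA_1, h1]
      by_cases h2 : z = top m0 k y
      · simp [cA, cA_1, h1, h2, hbxy, htyx]
      · have hc1 : cA m0 k z ≠ y := by
          intro e
          have h3 := e3
          rw [e, hc1y] at h3
          exact h2 h3.symm
        have hc2 : cA m0 k z ≠ bottom m0 k x := by
          intro e
          have h3 := e3
          rw [e, (cA_top_bottom m0 hm k x hx).2, htx] at h3
          exact h1 h3.symm
        simp [cA, cA_1, h1, h2, hc1, hc2, e3]
    · by_cases h1 : z = y
      · simp [cA, cA_1, h1]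
      by_cases h2 : z = bottom m0 k x
      · simp [cA, cA_1, h1, h2, htyx, hbxy]
      · have hd1 : cA_1 m0 k z ≠ x := by
          intro e
          have h3 := e4
          rw [e, hcx] at h3
          exact h2 h3.symm
        have hd2 : cA_1 m0 k z ≠ top m0 k y := by
          intro e
          have h3 := e4
          rw [e, (cA_top_bottom m0 hm k y hy).1, hby] at h3
          exact h1 h3.symm
        simp [cA, cA_1, h1, h2, hd1, hd2, e4]
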